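/- Let Ω = (0,1), A_i = (0, 1/(i+1)), 𝒞 = {A_i}, P(A_i) = 1/(i+1) + δ, δ > 0, P(A_i) ≤ 1. There exists a betting portfolio (β_i, B_i)_{i≥1} with B_i ∈ 𝒞 that leads to uniform sure loss (constant negative balance) and whose truncated balances Σ_{i=n}^∞ β_i(I_{B_i} − P(B_i)) converge pointwise on Ω and are uniformly bounded over n ∈ ℕ on Ω, even though P is coherent in betting system 2B. -/

import Mathlib

open Filter MeasureTheory ENNReal

variable {Ω : Type*}

noncomputable def ind (A : Set Ω) (ω : Ω) : ℝ := A.indicator (fun _ => (1:ℝ)) ω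

def SeriesTendsTo (f : ℕ → ℝ) (x : ℝ) : Prop :=
  Tendsto (fun n => ∑ i ∈ Finset.range n, f i) atTop (nhds x)

def SeriesConv (f : ℕ → ℝ) : Prop := ∃ x, SeriesTendsTo f x

noncomputable def bterm (P : Set Ω → ℝ) (α : ℕ → ℝ) (A : ℕ → Set Ω) (ω : Ω) (i : ℕ) : ℝ :=
  α i * (ind (A i) ω - P (A i))

def IsSetField (C : Set (Set Ω)) : Prop :=
  Set.univ ∈ C ∧ (∀ A ∈ C, Aᶜ ∈ C) ∧ ∀ A ∈ C, ∀ B ∈ C, A ∪ B ∈ C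

def System1 (C : Set (Set Ω)) (α : ℕ → ℝ) (A : ℕ → Set Ω) : Prop :=
  (∀ i, A i ∈ C) ∧ {i | α i ≠ 0}.Finite

def System2 (C : Set (Set Ω)) (P : Set Ω → ℝ) (α : ℕ → ℝ) (A : ℕ → Set Ω) : Prop :=
  (∀ i, A i ∈ C) ∧ Summable (fun i => |α i| * P (A i)) ∧
    ∀ ω, SeriesConv (bterm P α A ω)

def System2A (C : Set (Set Ω)) (P : Set Ω → ℝ) (α : ℕ → ℝ) (A : ℕ → Set Ω) : Prop :=
  (∀ i, A i ∈ C) ∧ ∀ ω, Summable (fun i => |bterm P α A ω i|)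

def System2B (C : Set (Set Ω)) (P : Set Ω → ℝ) (α : ℕ → ℝ) (A : ℕ → Set Ω) : Prop :=
  (∀ i, A i ∈ C) ∧ ∃ M : ℝ, ∀ ω, ∀ n, ∑ i ∈ Finset.range n, |bterm P α A ω i| ≤ M

def System3 (C : Set (Set Ω)) (P : Set Ω → ℝ) (α : ℕ → ℝ) (A : ℕ → Set Ω) : Prop :=
  (∀ i, A i ∈ C) ∧ SeriesConv (fun i => α i * P (A i)) ∧
    ∀ ω, SeriesConv (bterm P α A ω)

def IncoherentIn (P : Set Ω → ℝ) (S : (ℕ → ℝ) → (ℕ → Set Ω) → Prop) : Prop :=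
  ∃ α A, S α A ∧ ∃ ε > (0:ℝ), ∀ ω, ∃ L, SeriesTendsTo (bterm P α A ω) L ∧ L ≤ -ε

def CoherentIn (P : Set Ω → ℝ) (S : (ℕ → ℝ) → (ℕ → Set Ω) → Prop) : Prop :=
  ¬ IncoherentIn P S

def IsNullSet (C : Set (Set Ω)) (P : Set Ω → ℝ) (Z : Set Ω) : Prop :=
  ∀ δ : ℝ, 0 < δ → ∃ Zd ∈ C, Z ⊆ Zd ∧ P Zd < δ

def WeaklyIncoherentIn (C : Set (Set Ω)) (P : Set Ω → ℝ)
    (S : (ℕ → ℝ) → (ℕ → Set Ω) → Prop) : Prop :=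
  ∃ α A, S α A ∧ ∃ ε > (0:ℝ), ∃ Z : Set Ω, IsNullSet C P Z ∧
    ∀ ω ∉ Z, ∃ L, SeriesTendsTo (bterm P α A ω) L ∧ L ≤ -ε

def StronglyCoherentIn (C : Set (Set Ω)) (P : Set Ω → ℝ)
    (S : (ℕ → ℝ) → (ℕ → Set Ω) → Prop) : Prop :=
  ¬ WeaklyIncoherentIn C P S

def IrrationalIn (P : Set Ω → ℝ) (S : (ℕ → ℝ) → (ℕ → Set Ω) → Prop) : Prop :=
  ∃ α A, S α A ∧ ∀ ω, ∃ L, SeriesTendsTo (bterm P α A ω) L ∧ L < 0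

def RationalIn (P : Set Ω → ℝ) (S : (ℕ → ℝ) → (ℕ → Set Ω) → Prop) : Prop :=
  ¬ IrrationalIn P S

def IsCAProb (C : Set (Set Ω)) (P : Set Ω → ℝ) : Prop :=
  P Set.univ = 1 ∧ (∀ A ∈ C, 0 ≤ P A) ∧
  (∀ A ∈ C, ∀ B ∈ C, Disjoint A B → P (A ∪ B) = P A + P B) ∧
  (∀ A : ℕ → Set Ω, (∀ i, A i ∈ C) → Pairwise (Function.onFun Disjoint A) →
    (⋃ i, A i) ∈ C → HasSum (fun i => P (A i)) (P (⋃ i, A i)))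

def IsPAtom (C : Set (Set Ω)) (P : Set Ω → ℝ) (F : Set Ω) : Prop :=
  F ∈ C ∧ 0 < P F ∧ ∀ B ∈ C, B ⊆ F → P B = P F ∨ P B = 0

def FiniteAtomicPartition (C : Set (Set Ω)) (P : Set Ω → ℝ) : Prop :=
  ∃ (n : ℕ) (F : Fin n → Set Ω), (∀ j, IsPAtom C P (F j)) ∧
    Pairwise (Function.onFun Disjoint F) ∧ (⋃ j, F j) = Set.univ

def IsPFinite (C : Set (Set Ω)) (P : Set Ω → ℝ) : Prop :=
  ∀ B : ℕ → Set Ω, (∀ i, B i ∈ C) → (∀ i, B (i+1) ⊆ B i) →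
    Tendsto (fun i => P (B i)) atTop (nhds 0) → ∃ j, P (B j) = 0

abbrev Ω01 : Type := Set.Ioo (0:ℝ) 1

def A01 (i : ℕ) : Set Ω01 := {ω | (ω : ℝ) < 1 / ((i : ℝ) + 1)}

/-!
For a portfolio in system 2B, the bound at `ω = 1/2`, which lies in no `A01 k`, reads
`∑ |α i| * P (A i) ≤ M`; as `P ≥ δ`, `∑ |α i| < ∞`, and the balance is `G ω - S` with
`G ω = ∑ α i * 1_{A i} ω` and `S = ∑ α i * P (A i)`.
The prices `P (A01 k) = 1/(k+1) + δ` are those of the probability mixture of Lebesgue measure on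
`(0, 1/2)`, a mass `δ` at `0⁺` and the mass `1/2 - δ` at `1/2`. Averaging `G - S ≤ -ε` against
it gives `0 ≤ -ε`; the Lebesgue part is discretised at the points `1/(m+3)` with weights
`1/(m+2) - 1/(m+3)`, which give every `A01 k` its Lebesgue measure, and the mass at `0⁺` is the
limit `ω → 0`.

For the sure loss, let `x j = log (j+2) - log (j+1)`, so that `x i = x (2i+1) + x (2i+2)`, and bet
`F j = x j / P (A01 (j+1)) * (1_{A01 (j+1)} - P (A01 (j+1)))` at node `j` of the binary tree.
Replacing each node by its two children, one bet at a time, the balance after `3i+1` bets is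
`∑_{j=i}^{2i} F j`. At a fixed `ω` the bets are eventually lost, `F j ω = -x j`, so the balance
tends to `-∑_{j=i}^{2i} x j = -log 2`, while `|F j| ≤ (1/δ + 1) * x j` bounds all partial sums.
-/

open Topology

section Bets

lemma ind_nonneg (A : Set Ω) (ω : Ω) : 0 ≤ ind A ω :=
  Set.indicator_nonneg (fun _ _ => zero_le_one) ω

lemma ind_le_one (A : Set Ω) (ω : Ω) : ind A ω ≤ 1 :=
  Set.indicator_le_self' (fun _ _ => zero_le_one) ω

lemma abs_ind_le_one (A : Set Ω) (ω : Ω) : |ind A ω| ≤ 1 := by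
  rw [abs_of_nonneg (ind_nonneg A ω)]
  exact ind_le_one A ω

lemma summable_mul_of_abs_le {α f : ℕ → ℝ} {C : ℝ} (hα : Summable fun i => |α i|)
    (hf : ∀ i, |f i| ≤ C) : Summable fun i => α i * f i :=
  (hα.mul_right C).of_norm_bounded fun i => by
    rw [Real.norm_eq_abs, abs_mul]
    exact mul_le_mul_of_nonneg_left (hf i) (abs_nonneg _)

variable {P : Set Ω → ℝ} {α : ℕ → ℝ} {A : ℕ → Set Ω}

lemma summable_abs_of_sum_abs_bterm_le {δ M : ℝ} {ω : Ω} (hδ : 0 < δ)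
    (hP : ∀ i, δ ≤ P (A i)) (hω : ∀ i, ω ∉ A i)
    (hM : ∀ n, ∑ i ∈ Finset.range n, |bterm P α A ω i| ≤ M) :
    Summable fun i => |α i| := by
  have hterm : ∀ i, |bterm P α A ω i| = |α i| * P (A i) := fun i => by
    simp [bterm, ind, hω i, abs_mul, abs_of_pos (hδ.trans_le (hP i))]
  have hsum : Summable fun i => |α i| * P (A i) :=
    summable_of_sum_range_le (fun i => by rw [← hterm]; exact abs_nonneg _)
      (by simpa only [hterm] using hM)
  refine (hsum.mul_left δ⁻¹).of_nonneg_of_le (fun i => abs_nonneg _) fun i => ?_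
  rw [le_inv_mul_iff₀ hδ, mul_comm]
  exact mul_le_mul_of_nonneg_left (hP i) (abs_nonneg _)

lemma hasSum_bterm {C : ℝ} (hα : Summable fun i => |α i|) (hP : ∀ i, |P (A i)| ≤ C)
    (ω : Ω) :
    HasSum (bterm P α A ω) (∑' i, α i * ind (A i) ω - ∑' i, α i * P (A i)) := by
  have h := (summable_mul_of_abs_le hα fun i => abs_ind_le_one (A i) ω).hasSum.sub
    (summable_mul_of_abs_le hα hP).hasSum
  simp only [← mul_sub] at h
  exact h

lemma tendsto_tsum_mul_ind {w : ℕ → Ω} (hα : Summable fun i => |α i|)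
    (hw : ∀ i, ∀ᶠ n in atTop, w n ∈ A i) :
    Tendsto (fun n => ∑' i, α i * ind (A i) (w n)) atTop (𝓝 (∑' i, α i)) := by
  refine tendsto_tsum_of_dominated_convergence hα (fun i => ?_) (.of_forall fun n i => ?_)
  · refine tendsto_const_nhds.congr' ?_
    filter_upwards [hw i] with n hn
    simp [ind, hn]
  · rw [Real.norm_eq_abs, abs_mul]
    exact mul_le_of_le_one_right (abs_nonneg _) (abs_ind_le_one _ _)

lemma hasSum_mul_tsum_mul_ind {ℓ : ℕ → ℝ} (hℓ : Summable ℓ) (hℓ0 : 0 ≤ ℓ)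
    (hα : Summable fun i => |α i|) (t : ℕ → Ω) :
    HasSum (fun m => ℓ m * ∑' i, α i * ind (A i) (t m))
      (∑' i, α i * ∑' m, ℓ m * ind (A i) (t m)) := by
  set f : ℕ → ℕ → ℝ := fun m i => ℓ m * (α i * ind (A i) (t m))
  have hprod : Summable (Function.uncurry f) :=
    (hℓ.mul_of_nonneg hα hℓ0 fun i => abs_nonneg _).of_norm_bounded fun ⟨m, i⟩ => by
      simp only [f, Function.uncurry, Real.norm_eq_abs, abs_mul, abs_of_nonneg (hℓ0 m)]
      exact mul_le_mul_of_nonneg_left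
        (mul_le_of_le_one_right (abs_nonneg _) (abs_ind_le_one _ _)) (hℓ0 m)
  have h := hprod.hasSum.prod_fiberwise fun m =>
    ((summable_mul_of_abs_le hα fun i => abs_ind_le_one (A i) (t m)).mul_left (ℓ m)).hasSum
  simp only [tsum_mul_left] at h
  convert h using 1
  rw [hprod.tsum_prod, Function.uncurry_def, ← hprod.tsum_comm]
  simp_rw [f, ← tsum_mul_left, mul_left_comm (α _)]

end Bets

lemma hasSum_sub_succ_of_antitone {v : ℕ → ℝ} (hv : Antitone v)
    (h0 : Tendsto v atTop (𝓝 0)) :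
    HasSum (fun m => v m - v (m + 1)) (v 0) := by
  refine (hasSum_iff_tendsto_nat_of_nonneg (fun m => sub_nonneg.2 (hv m.le_succ)) _).2 ?_
  simp_rw [Finset.sum_range_sub']
  simpa using tendsto_const_nhds.sub h0

lemma SeriesTendsTo.nat_add {f : ℕ → ℝ} {c : ℝ} (h : SeriesTendsTo f c) (n : ℕ) :
    SeriesTendsTo (fun i => f (n + i)) (c - ∑ i ∈ Finset.range n, f i) := by
  refine (((tendsto_add_atTop_iff_nat n).2 h).sub_const _).congr fun m => ?_
  rw [add_comm m n, Finset.sum_range_add, add_sub_cancel_left]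

section TreeSeq

lemma sum_Ico_two_mul_succ {M : Type*} [AddCommGroup M] (F : ℕ → M) (i : ℕ) :
    ∑ j ∈ Finset.Ico (i + 1) (2 * (i + 1) + 1), F j
      = ∑ j ∈ Finset.Ico i (2 * i + 1), F j + F (2 * i + 1) + F (2 * i + 2) - F i := by
  rw [Finset.sum_eq_sum_Ico_succ_bot (by omega : i < 2 * i + 1),
    show 2 * (i + 1) + 1 = 2 * i + 2 + 1 by ring, Finset.sum_Ico_succ_top (by omega),
    Finset.sum_Ico_succ_top (by omega)]
  abel

lemma sum_Ico_two_mul_eq_of_split {M : Type*} [AddCommGroup M] {x : ℕ → M}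
    (hx : ∀ i, x i = x (2 * i + 1) + x (2 * i + 2)) (i : ℕ) :
    ∑ j ∈ Finset.Ico i (2 * i + 1), x j = x 0 := by
  induction i with
  | zero => simp
  | succ i ih => rw [sum_Ico_two_mul_succ, ih, hx i]; abel

-- Nodes of the binary tree `i ↦ 2i+1, 2i+2`; after the first term, each block of three terms
-- adds the two children of node `i` and removes node `i` itself.
def treeNode : ℕ → ℕ
  | 0 => 0
  | n + 1 => if n % 3 = 0 then 2 * (n / 3) + 1 else if n % 3 = 1 then 2 * (n / 3) + 2 else n / 3

noncomputable def treeSign (n : ℕ) : ℝ := if n ≠ 0 ∧ n % 3 = 0 then -1 else 1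

noncomputable def treeSeq (F : ℕ → ℝ) (n : ℕ) : ℝ := treeSign n * F (treeNode n)

variable {F : ℕ → ℝ}

@[simp] lemma treeSeq_zero : treeSeq F 0 = F 0 := by simp [treeSeq, treeSign, treeNode]

@[simp] lemma treeSeq_three_mul_add_one (i : ℕ) : treeSeq F (3 * i + 1) = F (2 * i + 1) := by
  simp [treeSeq, treeSign, treeNode]

@[simp] lemma treeSeq_three_mul_add_two (i : ℕ) : treeSeq F (3 * i + 2) = F (2 * i + 2) := by
  simp [treeSeq, treeSign, treeNode, show (3 * i + 1) % 3 = 1 by omega,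
    show (3 * i + 1) / 3 = i by omega]

@[simp] lemma treeSeq_three_mul_add_three (i : ℕ) : treeSeq F (3 * i + 3) = -F i := by
  simp [treeSeq, treeSign, treeNode, show (3 * i + 2) % 3 = 2 by omega,
    show (3 * i + 2) / 3 = i by omega]

lemma sum_range_treeSeq (i : ℕ) :
    ∑ n ∈ Finset.range (3 * i + 1), treeSeq F n = ∑ j ∈ Finset.Ico i (2 * i + 1), F j := by
  induction i with
  | zero => simp
  | succ i ih =>
    rw [show 3 * (i + 1) + 1 = 3 * i + 1 + 1 + 1 + 1 by ring, Finset.sum_range_succ,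
      Finset.sum_range_succ, Finset.sum_range_succ, ih, sum_Ico_two_mul_succ,
      treeSeq_three_mul_add_one, treeSeq_three_mul_add_two, treeSeq_three_mul_add_three]
    ring

lemma abs_sum_range_treeSeq_sub_le {r : ℕ} (hr : r < 3) (i : ℕ) :
    |∑ n ∈ Finset.range (3 * i + 1 + r), treeSeq F n - ∑ j ∈ Finset.Ico i (2 * i + 1), F j|
      ≤ |F (2 * i + 1)| + |F (2 * i + 2)| := by
  interval_cases r
  · rw [Nat.add_zero, sum_range_treeSeq, sub_self, abs_zero]
    positivity
  · rw [Finset.sum_range_succ, sum_range_treeSeq, treeSeq_three_mul_add_one, add_sub_cancel_left]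
    linarith [abs_nonneg (F (2 * i + 2))]
  · rw [show 3 * i + 1 + 2 = 3 * i + 2 + 1 by ring, Finset.sum_range_succ, Finset.sum_range_succ,
      sum_range_treeSeq, treeSeq_three_mul_add_one, treeSeq_three_mul_add_two, add_assoc,
      add_sub_cancel_left]
    exact abs_add_le _ _

lemma exists_eq_three_mul_add_one_add {n : ℕ} (hn : 1 ≤ n) :
    ∃ i r, r < 3 ∧ n = 3 * i + 1 + r :=
  ⟨(n - 1) / 3, (n - 1) % 3, Nat.mod_lt _ three_pos, by omega⟩

lemma seriesTendsTo_treeSeq {c : ℝ}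
    (hS : Tendsto (fun i => ∑ j ∈ Finset.Ico i (2 * i + 1), F j) atTop (𝓝 c))
    (hF : Tendsto F atTop (𝓝 0)) : SeriesTendsTo (treeSeq F) c := by
  set i : ℕ → ℕ := fun n => (n - 1) / 3
  have hi : Tendsto i atTop atTop :=
    (Nat.tendsto_div_const_atTop three_ne_zero).comp (tendsto_sub_atTop_nat 1)
  have herr : Tendsto (fun n => |F (2 * i n + 1)| + |F (2 * i n + 2)|) atTop (𝓝 0) := by
    simpa using ((hF.comp (tendsto_atTop_mono (fun n => by omega) hi)).abs).add
      (hF.comp (tendsto_atTop_mono (fun n => by omega) hi)).abs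
  refine (hS.comp hi).congr_dist (squeeze_zero' (.of_forall fun n => dist_nonneg) ?_ herr)
  filter_upwards [eventually_ge_atTop 1] with n hn
  obtain ⟨j, r, hr, rfl⟩ := exists_eq_three_mul_add_one_add hn
  have : i (3 * j + 1 + r) = j := by simp only [i]; omega
  rw [Function.comp_apply, this, dist_comm, Real.dist_eq]
  exact abs_sum_range_treeSeq_sub_le hr j

lemma abs_sum_range_treeSeq_le {x : ℕ → ℝ} {C : ℝ}
    (hx : ∀ i, x i = x (2 * i + 1) + x (2 * i + 2)) (hF : ∀ j, |F j| ≤ C * x j) (n : ℕ) :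
    |∑ m ∈ Finset.range n, treeSeq F m| ≤ 2 * (C * x 0) := by
  have hCx : ∀ j, 0 ≤ C * x j := fun j => (abs_nonneg _).trans (hF j)
  have hsum : ∀ i, ∑ j ∈ Finset.Ico i (2 * i + 1), C * x j = C * x 0 := fun i => by
    rw [← Finset.mul_sum, sum_Ico_two_mul_eq_of_split hx]
  rcases Nat.eq_zero_or_pos n with rfl | hn
  · simpa using hCx 0
  obtain ⟨i, r, hr, rfl⟩ := exists_eq_three_mul_add_one_add hn
  have hS : |∑ j ∈ Finset.Ico i (2 * i + 1), F j| ≤ C * x 0 :=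
    (Finset.abs_sum_le_sum_abs _ _).trans ((Finset.sum_le_sum fun j _ => hF j).trans (hsum i).le)
  have hchildren : |F (2 * i + 1)| + |F (2 * i + 2)| ≤ C * x 0 := by
    calc |F (2 * i + 1)| + |F (2 * i + 2)| ≤ C * x i := by
          rw [hx i, mul_add]; exact add_le_add (hF _) (hF _)
      _ ≤ C * x 0 := hsum i ▸ Finset.single_le_sum (fun j _ => hCx j) (by simp; omega)
  have := abs_sum_range_treeSeq_sub_le (F := F) hr i
  have := abs_sub_abs_le_abs_sub (∑ m ∈ Finset.range (3 * i + 1 + r), treeSeq F m)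
    (∑ j ∈ Finset.Ico i (2 * i + 1), F j)
  linarith

end TreeSeq

lemma abs_div_mul_sub_le {x p δ y : ℝ} (hx : 0 ≤ x) (hδ : 0 < δ) (hp : δ ≤ p) (hy₀ : 0 ≤ y)
    (hy₁ : y ≤ 1) : |x / p * (y - p)| ≤ (1 / δ + 1) * x := by
  have hp₀ : 0 < p := hδ.trans_le hp
  have h₀ : 0 ≤ x * y / p := by positivity
  have h₁ : x * y / p ≤ x / δ := div_le_div₀ hx (mul_le_of_le_one_right hx hy₁) hδ hp
  have h₂ : (1 / δ + 1) * x = x / δ + x := by ring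
  rw [show x / p * (y - p) = x * y / p - x by field_simp, abs_le]
  constructor <;> linarith

noncomputable def logStep (j : ℕ) : ℝ := Real.log (j + 2) - Real.log (j + 1)

lemma logStep_eq_add (i : ℕ) : logStep i = logStep (2 * i + 1) + logStep (2 * i + 2) := by
  simp only [logStep]
  push_cast
  rw [show (2 * (i : ℝ) + 2 + 2) = 2 * (i + 2) by ring,
    show (2 * (i : ℝ) + 1 + 1) = 2 * (i + 1) by ring,
    Real.log_mul two_ne_zero (by positivity), Real.log_mul two_ne_zero (by positivity),
    show (2 * (i : ℝ) + 2 + 1) = 2 * i + 1 + 2 by ring]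
  ring

lemma logStep_nonneg (j : ℕ) : 0 ≤ logStep j :=
  sub_nonneg.2 (Real.log_le_log (by positivity) (by linarith))

lemma logStep_zero : logStep 0 = Real.log 2 := by norm_num [logStep]

lemma tendsto_logStep : Tendsto logStep atTop (𝓝 0) := by
  have h := Real.tendsto_log_nat_add_one_sub_log.comp (tendsto_add_atTop_nat 1)
  refine h.congr fun j => ?_
  simp only [Function.comp_apply, logStep]
  push_cast
  ring_nf

namespace Ω01

noncomputable def recip (k : ℕ) : Ω01 :=
  ⟨1 / (k + 2), by positivity,
    by rw [div_lt_one (by positivity)]; linarith [k.cast_nonneg (α := ℝ)]⟩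

lemma recip_mem_A01_iff {j k : ℕ} : recip k ∈ A01 j ↔ j ≤ k := by
  simp only [recip, A01, Set.mem_ofPred_eq]
  rw [one_div_lt_one_div (by positivity) (by positivity)]
  norm_cast
  omega

lemma eventually_notMem_A01 (ω : Ω01) : ∀ᶠ j in atTop, ω ∉ A01 j := by
  obtain ⟨N, hN⟩ := exists_nat_one_div_lt ω.2.1
  filter_upwards [eventually_ge_atTop N] with j hj
  simp only [A01, Set.mem_ofPred_eq, not_lt]
  refine le_trans ?_ hN.le
  gcongr

end Ω01

open Ω01

lemma hasSum_mul_ind_A01_recip {j : ℕ} (hj : 1 ≤ j) :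
    HasSum
      (fun m : ℕ => (1 / ((m : ℝ) + 2) - 1 / ((m : ℝ) + 3)) * ind (A01 j) (recip (m + 1)))
      (1 / ((j : ℝ) + 1)) := by
  set v : ℕ → ℝ := fun m => 1 / ((max (m + 2) (j + 1) : ℕ) : ℝ)
  have hv : Antitone v := fun a b hab => by
    simp only [v]; gcongr
  have h0 : Tendsto v atTop (𝓝 0) := by
    refine squeeze_zero (fun m => by positivity) (fun m => ?_)
      tendsto_one_div_add_atTop_nhds_zero_nat
    simp only [v]
    gcongr
    exact_mod_cast (show m + 1 ≤ max (m + 2) (j + 1) by omega)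
  convert hasSum_sub_succ_of_antitone hv h0 using 1
  · ext m
    simp only [v, ind]
    rcases le_or_gt j (m + 1) with h | h
    · rw [max_eq_left (by omega), max_eq_left (by omega),
        Set.indicator_of_mem (recip_mem_A01_iff.2 h)]
      push_cast
      ring
    · rw [max_eq_right (by omega), max_eq_right (by omega),
        Set.indicator_of_notMem (recip_mem_A01_iff.not.2 (by omega)), mul_zero, sub_self]
  · simp only [v]
    rw [max_eq_right (by omega)]
    push_cast
    ring

lemma tsum_mul_one_div_le_half_of_forall_tsum_mul_ind_le {α : ℕ → ℝ} {k : ℕ → ℕ} {c : ℝ}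
    (hk : ∀ i, 1 ≤ k i) (hα : Summable fun i => |α i|)
    (hc : ∀ ω, ∑' i, α i * ind (A01 (k i)) ω ≤ c) :
    ∑' i, α i * (1 / ((k i : ℝ) + 1)) ≤ c / 2 := by
  set ℓ : ℕ → ℝ := fun m => 1 / ((m : ℝ) + 2) - 1 / ((m : ℝ) + 3)
  have hℓ : HasSum ℓ (1 / 2) := by
    have h := hasSum_mul_ind_A01_recip (j := 1) le_rfl
    simp only [ind, Set.indicator_of_mem (recip_mem_A01_iff.2 (Nat.le_add_left 1 _)),
      mul_one] at h
    convert h using 1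
    norm_num
  have hℓ0 : 0 ≤ ℓ := fun m => by
    show 0 ≤ 1 / ((m : ℝ) + 2) - 1 / ((m : ℝ) + 3)
    rw [sub_nonneg]; gcongr; norm_num
  have h := hasSum_mul_tsum_mul_ind (A := fun i => A01 (k i)) hℓ.summable hℓ0 hα
    fun m => recip (m + 1)
  have hq (i : ℕ) : ∑' m, ℓ m * ind (A01 (k i)) (recip (m + 1)) = 1 / ((k i : ℝ) + 1) :=
    (hasSum_mul_ind_A01_recip (hk i)).tsum_eq
  simp only [hq] at h
  have := hasSum_le (fun m => mul_le_mul_of_nonneg_left (hc (recip (m + 1))) (hℓ0 m)) h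
    (hℓ.mul_right c)
  linarith

theorem coherentIn_system2B_A01 {δ : ℝ} (hδ : 0 < δ) {P : Set Ω01 → ℝ}
    (hP : ∀ i, 1 ≤ i → P (A01 i) = 1 / ((i : ℝ) + 1) + δ)
    (hle : ∀ i, 1 ≤ i → P (A01 i) ≤ 1) :
    CoherentIn P (System2B {S | ∃ i, 1 ≤ i ∧ S = A01 i} P) := by
  rintro ⟨α, A, ⟨hAC, M, hM⟩, ε, hε, hloss⟩
  choose k hk hA using hAC
  obtain rfl : A = fun i => A01 (k i) := funext hA
  have hδ_le : δ ≤ 1 / 2 := by linarith [hP 1 le_rfl ▸ hle 1 le_rfl]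
  have hPk (i : ℕ) : P (A01 (k i)) = 1 / ((k i : ℝ) + 1) + δ := hP _ (hk i)
  have hq_pos (i : ℕ) : 0 < 1 / ((k i : ℝ) + 1) := by positivity
  have hq_le (i : ℕ) : 1 / ((k i : ℝ) + 1) ≤ 1 := by
    rw [div_le_one (by positivity)]; linarith [(k i).cast_nonneg (α := ℝ)]
  have hPabs (i : ℕ) : |P (A01 (k i))| ≤ 1 := by
    rw [abs_le]; constructor <;> linarith [hle _ (hk i), hPk i, hq_pos i]
  have hnot (i : ℕ) : recip 0 ∉ A01 (k i) := recip_mem_A01_iff.not.2 (by have := hk i; omega)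
  have hα : Summable fun i => |α i| :=
    summable_abs_of_sum_abs_bterm_le hδ (fun i => by linarith [hPk i, hq_pos i]) hnot
      (hM (recip 0))
  set G : Ω01 → ℝ := fun ω => ∑' i, α i * ind (A01 (k i)) ω
  set S := ∑' i, α i * P (A01 (k i))
  have hloss' (ω : Ω01) : G ω - S ≤ -ε := by
    obtain ⟨L, hL, hLε⟩ := hloss ω
    exact (tendsto_nhds_unique (hasSum_bterm hα hPabs ω).tendsto_sum_nat hL).trans_le hLε
  have hS_ge : ε ≤ S := by
    have h := hloss' (recip 0)
    have hG : G (recip 0) = 0 := by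
      simp [G, ind, Set.indicator_of_notMem (hnot _)]
    linarith
  have hT : ∑' i, α i - S ≤ -ε :=
    le_of_tendsto' ((tendsto_tsum_mul_ind hα fun i => eventually_atTop.2 ⟨k i, fun n hn =>
      recip_mem_A01_iff.2 hn⟩).sub_const S) fun n => hloss' (recip n)
  have hmix : ∑' i, α i * (1 / ((k i : ℝ) + 1)) ≤ (S - ε) / 2 :=
    tsum_mul_one_div_le_half_of_forall_tsum_mul_ind_le hk hα fun ω => by linarith [hloss' ω]
  have hS : S = ∑' i, α i * (1 / ((k i : ℝ) + 1)) + δ * ∑' i, α i := by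
    simp only [S, hPk, mul_add]
    rw [(summable_mul_of_abs_le hα fun i => (abs_of_pos (hq_pos i)).trans_le (hq_le i)).tsum_add
      (hα.of_abs.mul_right δ), tsum_mul_right, mul_comm]
  have hδT := mul_le_mul_of_nonneg_left (show ∑' i, α i ≤ S - ε by linarith) hδ.le
  nlinarith [mul_nonneg (sub_nonneg.2 hδ_le) (hε.le.trans hS_ge)]

theorem exists_portfolio_sure_loss_A01 {δ : ℝ} (hδ : 0 < δ) {P : Set Ω01 → ℝ}
    (hP : ∀ i, 1 ≤ i → P (A01 i) = 1 / ((i : ℝ) + 1) + δ) :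
    ∃ (β : ℕ → ℝ) (B : ℕ → Set Ω01), (∀ i, ∃ j, 1 ≤ j ∧ B i = A01 j) ∧
      (∃ c : ℝ, c < 0 ∧ ∀ ω, SeriesTendsTo (bterm P β B ω) c) ∧
      (∀ n : ℕ, ∀ ω, SeriesConv (fun i => bterm P β B ω (n + i))) ∧
      (∃ M : ℝ, ∀ n : ℕ, ∀ ω L, SeriesTendsTo (fun i => bterm P β B ω (n + i)) L → |L| ≤ M) := by
  set p : ℕ → ℝ := fun j => P (A01 (j + 1))
  have hp (j : ℕ) : δ ≤ p j := by
    simp only [p, hP (j + 1) (by omega)]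
    exact le_add_of_nonneg_left (by positivity)
  set F : ℕ → Ω01 → ℝ := fun j ω => logStep j / p j * (ind (A01 (j + 1)) ω - p j)
  have hp_pos (j : ℕ) : 0 < p j := hδ.trans_le (hp j)
  have hF_le (j : ℕ) (ω : Ω01) : |F j ω| ≤ (1 / δ + 1) * logStep j :=
    abs_div_mul_sub_le (logStep_nonneg j) hδ (hp j) (ind_nonneg _ ω) (ind_le_one _ ω)
  have hF_eq (ω : Ω01) : ∀ᶠ j in atTop, F j ω = -logStep j := by
    filter_upwards [(tendsto_add_atTop_nat 1).eventually (eventually_notMem_A01 ω)] with j hj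
    simp only [F, ind, Set.indicator_of_notMem hj]
    field_simp [(hp_pos j).ne']
    ring
  have hlim (ω : Ω01) : SeriesTendsTo (treeSeq (F · ω)) (-Real.log 2) := by
    obtain ⟨N, hN⟩ := eventually_atTop.1 (hF_eq ω)
    refine seriesTendsTo_treeSeq (tendsto_const_nhds.congr' ?_)
      (by simpa using tendsto_logStep.neg.congr' ((hF_eq ω).mono fun j h => h.symm))
    filter_upwards [eventually_ge_atTop N] with i hi
    rw [Finset.sum_congr rfl fun j hj => hN j (hi.trans (Finset.mem_Ico.1 hj).1),
      Finset.sum_neg_distrib, sum_Ico_two_mul_eq_of_split logStep_eq_add, logStep_zero]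
  set β := treeSeq fun j => logStep j / p j
  have hbterm (ω : Ω01) : bterm P β (fun n => A01 (treeNode n + 1)) ω = treeSeq (F · ω) :=
    funext fun n => by simp only [bterm, β, treeSeq, F, p]; ring
  have hlog : 0 < Real.log 2 := Real.log_pos one_lt_two
  refine ⟨β, fun n => A01 (treeNode n + 1), fun n => ⟨_, by omega, rfl⟩,
    ⟨-Real.log 2, neg_lt_zero.2 hlog, fun ω => hbterm ω ▸ hlim ω⟩,
    fun n ω => ⟨_, hbterm ω ▸ (hlim ω).nat_add n⟩,
    ⟨Real.log 2 + 2 * ((1 / δ + 1) * Real.log 2), fun n ω L hL => ?_⟩⟩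
  rw [hbterm] at hL
  rw [tendsto_nhds_unique hL ((hlim ω).nat_add n)]
  have hsum := abs_sum_range_treeSeq_le logStep_eq_add (hF_le · ω) n
  rw [logStep_zero] at hsum
  calc _ ≤ |-Real.log 2| + |∑ i ∈ Finset.range n, treeSeq (F · ω) i| := abs_sub _ _
    _ ≤ _ := by rw [abs_neg, abs_of_pos hlog]; linarith

theorem stmt19 (δ : ℝ) (hδ : 0 < δ) (P : Set Ω01 → ℝ)
    (hP : ∀ i, 1 ≤ i → P (A01 i) = 1 / ((i : ℝ) + 1) + δ)
    (hle : ∀ i, 1 ≤ i → P (A01 i) ≤ 1) :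
    CoherentIn P (System2B {S | ∃ i, 1 ≤ i ∧ S = A01 i} P) ∧
    ∃ (β : ℕ → ℝ) (B : ℕ → Set Ω01), (∀ i, ∃ j, 1 ≤ j ∧ B i = A01 j) ∧
      (∃ c : ℝ, c < 0 ∧ ∀ ω, SeriesTendsTo (bterm P β B ω) c) ∧
      (∀ n : ℕ, ∀ ω, SeriesConv (fun i => bterm P β B ω (n + i))) ∧
      (∃ M : ℝ, ∀ n : ℕ, ∀ ω L, SeriesTendsTo (fun i => bterm P β B ω (n + i)) L → |L| ≤ M) :=
  ⟨coherentIn_system2B_A01 hδ hP hle, exists_portfolio_sure_loss_A01 hδ hP⟩
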